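/- There exist a, b ∈ ℂ with |a|² + |b|² = 1, giving the qubit unitary U = [[a, b], [−conj(b), conj(a)]], and a qubit density matrix ρ, such that for every θ ∈ ℝ: C_{l1}(ρ) − C_{l1}(U ρ U†) > 1 − C_{l1}(U ψ_θ ψ_θ† U†). That is, the generalized de-cohering power of U (the supremum of the l1-coherence decrease over all density matrices) strictly exceeds its de-cohering power (the maximum of the decrease over maximally coherent states); the two de-cohering powers are not equal in general for qubit unitaries. -/

import Mathlib

open Matrix BigOperators ComplexOrder

/-- The l1-coherence of a matrix: the sum of the absolute values of its
off-diagonal entries. -/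
noncomputable def Cl1 {n : ℕ} (A : Matrix (Fin n) (Fin n) ℂ) : ℝ :=
  ∑ i, ∑ j, if i ≠ j then ‖A i j‖ else 0

/-- A density matrix: positive semidefinite with trace 1. -/
def IsDensity {n : ℕ} (ρ : Matrix (Fin n) (Fin n) ℂ) : Prop :=
  ρ.PosSemidef ∧ ρ.trace = 1

/-- A quantum operation (CPTP map) given by a finite family of Kraus operators. -/
def IsQuantumOp {n : ℕ} (Φ : Matrix (Fin n) (Fin n) ℂ → Matrix (Fin n) (Fin n) ℂ) : Prop :=
  ∃ (m : ℕ) (K : Fin m → Matrix (Fin n) (Fin n) ℂ),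
    (∑ i, (K i)ᴴ * K i) = 1 ∧ ∀ ρ, Φ ρ = ∑ i, K i * ρ * (K i)ᴴ

/-- The dephasing map `Δ`, keeping only the diagonal part of a matrix. -/
def Deph {n : ℕ} (A : Matrix (Fin n) (Fin n) ℂ) : Matrix (Fin n) (Fin n) ℂ :=
  Matrix.of fun i j => if i = j then A i j else 0

/-- The maximally coherent qubit state vector `(1/√2)(1, e^{iθ})`. -/
noncomputable def psi (θ : ℝ) : Fin 2 → ℂ :=
  ![1 / (Real.sqrt 2 : ℂ), Complex.exp (θ * Complex.I) / (Real.sqrt 2 : ℂ)]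

/-- The outer product `w w†` of a vector with itself. -/
def outer {n : ℕ} (w : Fin n → ℂ) : Matrix (Fin n) (Fin n) ℂ :=
  Matrix.vecMulVec w (star w)

/-- The qubit unitary `[[a, b], [-conj b, conj a]]`. -/
def Uab (a b : ℂ) : Matrix (Fin 2) (Fin 2) ℂ :=
  !![a, b; -(starRingEnd ℂ) b, (starRingEnd ℂ) a]

/-- The binary entropy (base 2), with the convention `0 · log 0 = 0`. -/
noncomputable def H (x : ℝ) : ℝ :=
  -(x * Real.logb 2 x) - (1 - x) * Real.logb 2 (1 - x)


theorem Cl1_fin_two (A : Matrix (Fin 2) (Fin 2) ℂ) : Cl1 A = ‖A 0 1‖ + ‖A 1 0‖ := by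
  simp [Cl1, Fin.sum_univ_two]

theorem Cl1_outer_fin_two (w : Fin 2 → ℂ) : Cl1 (outer w) = 2 * (‖w 0‖ * ‖w 1‖) := by
  simp only [Cl1_fin_two, outer, vecMulVec_apply, Pi.star_apply, norm_mul, norm_star]
  ring

theorem outer_mulVec {n : ℕ} (M : Matrix (Fin n) (Fin n) ℂ) (w : Fin n → ℂ) :
    outer (M *ᵥ w) = M * outer w * Mᴴ := by
  rw [outer, outer, mul_vecMulVec, vecMulVec_mul, star_mulVec]

theorem isDensity_outer {n : ℕ} {w : Fin n → ℂ} (hw : ∑ i, ‖w i‖ ^ 2 = 1) :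
    IsDensity (outer w) := by
  refine ⟨posSemidef_vecMulVec_self_star w, ?_⟩
  rw [outer, trace_vecMulVec]
  simp only [dotProduct, Pi.star_apply, Complex.star_def, Complex.mul_conj, Complex.normSq_eq_norm_sq]
  exact_mod_cast hw

theorem Uab_mulVec_star {a b : ℂ} (h : ‖a‖ ^ 2 + ‖b‖ ^ 2 = 1) :
    Uab a b *ᵥ star ![a, b] = ![1, 0] := by
  have h' : a * (starRingEnd ℂ) a + b * (starRingEnd ℂ) b = 1 := by
    simp only [Complex.mul_conj, Complex.normSq_eq_norm_sq]
    exact_mod_cast h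
  ext i
  fin_cases i
  · simpa [Uab, mulVec, dotProduct, Fin.sum_univ_two] using h'
  · simp only [Uab, mulVec, dotProduct, Fin.sum_univ_two, Fin.mk_one, of_apply, cons_val', cons_val_zero,
      cons_val_one, cons_val_fin_one, Pi.star_apply, RCLike.star_def]
    ring

theorem Cl1_outer_Uab_mulVec_psi (a b : ℂ) (θ : ℝ) :
    Cl1 (outer (Uab a b *ᵥ psi θ)) = ‖a ^ 2 - b ^ 2 * Complex.exp (θ * Complex.I) ^ 2‖ := by
  set e := Complex.exp (θ * Complex.I) with he
  have he_norm : ‖e‖ = 1 := Complex.norm_exp_ofReal_mul_I θ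
  have hw0 : (Uab a b *ᵥ psi θ) 0 = (a + b * e) / (Real.sqrt 2 : ℂ) := by
    simp only [Uab, psi, mulVec, dotProduct, Fin.sum_univ_two, of_apply, cons_val', cons_val_zero,
      cons_val_one, cons_val_fin_one, ← he]
    ring
  have hw1 : (Uab a b *ᵥ psi θ) 1 = (-(starRingEnd ℂ) b + (starRingEnd ℂ) a * e) / (Real.sqrt 2 : ℂ) := by
    simp only [Uab, psi, mulVec, dotProduct, Fin.sum_univ_two, of_apply, cons_val', cons_val_zero,
      cons_val_one, cons_val_fin_one, ← he]
    ring
  -- multiplying the conjugate by the unimodular `e` turns `-b̄ + ā e` into `a - b e`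
  have hconj : ‖-(starRingEnd ℂ) b + (starRingEnd ℂ) a * e‖ = ‖a - b * e‖ := by
    have he_conj : e * (starRingEnd ℂ) e = 1 := by
      rw [Complex.mul_conj, Complex.normSq_eq_norm_sq, he_norm]; norm_num
    rw [← Complex.norm_conj, ← one_mul ‖_‖, ← he_norm, ← norm_mul]
    congr 1
    simp only [map_add, map_neg, map_mul, Complex.conj_conj]
    linear_combination a * he_conj
  rw [Cl1_outer_fin_two, hw0, hw1, norm_div, norm_div, hconj, Complex.norm_real,
    Real.norm_of_nonneg (Real.sqrt_nonneg 2)]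
  field_simp
  rw [Real.sq_sqrt zero_le_two, mul_assoc, ← norm_mul]
  ring_nf

theorem sq_norm_sub_sq_norm_le_Cl1_outer_Uab_mulVec_psi (a b : ℂ) (θ : ℝ) :
    ‖a‖ ^ 2 - ‖b‖ ^ 2 ≤ Cl1 (outer (Uab a b *ᵥ psi θ)) := by
  have he_norm : ‖Complex.exp (θ * Complex.I)‖ = 1 := Complex.norm_exp_ofReal_mul_I θ
  rw [Cl1_outer_Uab_mulVec_psi]
  have := norm_sub_norm_le (a ^ 2) (b ^ 2 * Complex.exp (θ * Complex.I) ^ 2)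
  rwa [norm_mul, norm_pow, norm_pow, norm_pow, he_norm, one_pow, mul_one] at this

/-- The state `ρ = U† |0⟩⟨0| U` has coherence `2‖a‖‖b‖`, all of which `U` destroys, while `U`
takes every maximally coherent state to one of coherence at least `‖a‖² - ‖b‖²`. -/
theorem exists_isDensity_Cl1_sub_Cl1_conj_Uab_gt {a b : ℂ} (h : ‖a‖ ^ 2 + ‖b‖ ^ 2 = 1)
    (hb : 0 < ‖b‖) (hba : ‖b‖ < ‖a‖) :
    ∃ ρ : Matrix (Fin 2) (Fin 2) ℂ, IsDensity ρ ∧ ∀ θ : ℝ,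
      1 - Cl1 (outer (Uab a b *ᵥ psi θ)) < Cl1 ρ - Cl1 (Uab a b * ρ * (Uab a b)ᴴ) := by
  refine ⟨outer (star ![a, b]), isDensity_outer (by simpa [Fin.sum_univ_two] using h), fun θ => ?_⟩
  have hρ : Cl1 (outer (star ![a, b])) = 2 * (‖a‖ * ‖b‖) := by
    simp [Cl1_outer_fin_two]
  have hUρU : Cl1 (Uab a b * outer (star ![a, b]) * (Uab a b)ᴴ) = 0 := by
    simp [← outer_mulVec, Uab_mulVec_star h, Cl1_outer_fin_two]
  have hψ := sq_norm_sub_sq_norm_le_Cl1_outer_Uab_mulVec_psi a b θ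
  rw [hρ, hUρU]
  nlinarith [mul_lt_mul_of_pos_right hba hb]

theorem generalized_decohering_power_gt_decohering_power_l1 :
    ∃ a b : ℂ, ‖a‖ ^ 2 + ‖b‖ ^ 2 = 1 ∧
      ∃ ρ : Matrix (Fin 2) (Fin 2) ℂ, IsDensity ρ ∧
        ∀ θ : ℝ,
          1 - Cl1 (outer ((Uab a b).mulVec (psi θ))) <
            Cl1 ρ - Cl1 (Uab a b * ρ * (Uab a b)ᴴ) := by
  have ha : ‖(4 / 5 : ℂ)‖ = 4 / 5 := by norm_num
  have hb : ‖(3 / 5 : ℂ)‖ = 3 / 5 := by norm_num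
  have hnorm : ‖(4 / 5 : ℂ)‖ ^ 2 + ‖(3 / 5 : ℂ)‖ ^ 2 = 1 := by rw [ha, hb]; norm_num
  exact ⟨4 / 5, 3 / 5, hnorm,
    exists_isDensity_Cl1_sub_Cl1_conj_Uab_gt hnorm (by rw [hb]; norm_num) (by rw [ha, hb]; norm_num)⟩
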